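/- arXiv:2107.05976 — 8 statements merged into one kernel-verified Lean document; each statement's English description precedes it below -/
import Mathlib

section
/- Let G = A₀^{(I)} ⋊ Γ be the coinduced group of an action Γ₀ ↷ A₀ where Γ₀ ≤ Γ and I = Γ/Γ₀. If g = aγ ∈ G with a ∈ A₀^{(I)} nontrivial and γ ∈ Γ, then g Γ g⁻¹ ∩ Γ ⊆ Norm_Γ(F), where F ⊆ I is the (finite, nonempty) support of a and Norm_Γ(F) = {h ∈ Γ : h·F = F}. -/
open Pointwise

/-- The restricted direct sum `⊕_{i ∈ I} A₀`. -/
def finSupp (I A₀ : Type*) [Group A₀] : Subgroup (I → A₀) where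
  carrier := {x | (Function.mulSupport x).Finite}
  one_mem' := by
    have : Function.mulSupport (1 : I → A₀) = ∅ := Function.mulSupport_one
    simp [Set.mem_setOf_eq, this]
  mul_mem' := by
    intro x y hx hy
    exact (Set.Finite.union hx hy).subset (Function.mulSupport_mul x y)
  inv_mem' := by
    intro x hx
    simpa [Function.mulSupport_inv] using hx

/-- Let `G = A₀^{(I)} ⋊ Γ` be the coinduced group of an action `Γ₀ ↷ A₀` (abstractly: a
semidirect product for an action `σ` of `Γ` on the restricted direct sum which permutes the
coordinates along `Γ ↷ I` with base automorphisms).  If `g = a·γ ∈ G` with `a ∈ A₀^{(I)}`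
nontrivial, then the support `F` of `a` is finite and nonempty, and
`g Γ g⁻¹ ∩ Γ ⊆ Norm_Γ(F) = {h : h • F = F}`. -/
theorem stmt3 {Γ A₀ I : Type*} [Group Γ] [Group A₀] [MulAction Γ I]
    (σ : Γ →* MulAut (finSupp I A₀))
    (hσ : ∀ (g : Γ) (i : I), ∃ τ : MulAut A₀, ∀ x : finSupp I A₀,
      ((σ g x : I → A₀)) (g • i) = τ ((x : I → A₀) i))
    (a : finSupp I A₀) (γ : Γ) (ha : a ≠ 1) :
    (Function.mulSupport (a : I → A₀)).Finite ∧
    (Function.mulSupport (a : I → A₀)).Nonempty ∧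
    ∀ h k : Γ,
      (⟨a, γ⟩ : finSupp I A₀ ⋊[σ] Γ) * SemidirectProduct.inr h * (⟨a, γ⟩ : finSupp I A₀ ⋊[σ] Γ)⁻¹
          = SemidirectProduct.inr k →
      k • Function.mulSupport (a : I → A₀) = Function.mulSupport (a : I → A₀) := by
  refine ⟨a.2, ?_, ?_⟩
  · rcases Function.ne_iff.mp (fun hfun => ha (Subtype.ext hfun)) with ⟨i, hi⟩
    exact ⟨i, hi⟩
  · intro h k heq
    have hleft := congrArg SemidirectProduct.left heq
    have hright := congrArg SemidirectProduct.right heq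
    simp [SemidirectProduct.mul_left, SemidirectProduct.mul_right,
      SemidirectProduct.inv_left, SemidirectProduct.inv_right, mul_assoc] at hleft hright
    -- hright : γ * (h * γ⁻¹) = k
    have hk : γ * h * γ⁻¹ = k := by rw [← mul_assoc] at hright; exact hright
    -- hleft should give σ k a = a (in some form)
    have hfix : σ k a = a := by
      have h1 : a * (σ (γ * h * γ⁻¹)) a⁻¹ = 1 := by
        have := hleft
        simpa [map_mul, mul_assoc] using this
      rw [hk] at h1
      have h2 : (σ k) a⁻¹ = a⁻¹ := (mul_eq_one_iff_inv_eq.mp h1).symm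
      have := congrArg (·⁻¹) h2
      simpa [map_inv] using this
    ext i
    rw [Set.mem_smul_set_iff_inv_smul_mem]
    obtain ⟨τ, hτ⟩ := hσ k (k⁻¹ • i)
    have key : (a : I → A₀) i = τ ((a : I → A₀) (k⁻¹ • i)) := by
      have := hτ a
      rw [hfix] at this
      simpa using this
    simp only [Function.mem_mulSupport]
    constructor
    · intro hne hcon
      rw [key] at hcon
      exact hne (by simpa using τ.injective (by simpa using hcon) : _)
    · intro hne hcon
      apply hne
      rw [hcon] at key
      simpa using key
end

section
/- Let Γ₀ ≤ Γ with [Γ : Γ₀] = ∞, let Γ₀ ↷ A₀ be an action by automorphisms with coinduced group G = A₀^{(I)} ⋊ Γ, I = Γ/Γ₀. Then the one-sided commensurator of Γ in G equals Γ, i.e. Comm_G^{(1)}(Γ) := {g ∈ G : [Γ : gΓg⁻¹ ∩ Γ] < ∞} = Γ. -/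
/-!
Write `g = (a, γ)`. An element `ε ∈ Γ` satisfies `g⁻¹ ε g ∈ Γ` exactly when `ε` fixes `a`, so
`[Γ : gΓg⁻¹ ∩ Γ]` is the index of the stabilizer `S` of `a`. If `a ≠ 1`, then `S` permutes the
finite nonempty support of `a` (the action moves coordinates along `Γ ⧸ Γ₀` and applies
automorphisms), so a point `i` of the support has a finite `S`-orbit. If `S` had finite index,
so would the stabilizer of `i`, a conjugate of `Γ₀`.
-/

open MulAction Subgroup

theorem MulAction.index_stabilizer_ne_zero_of_finite_orbit {G X : Type*} [Group G] [MulAction G X]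
    {H : Subgroup G} (hH : H.index ≠ 0) {x : X} (hx : (orbit H x).Finite) :
    (stabilizer G x).index ≠ 0 := by
  have hrel : (stabilizer G x).relIndex H ≠ 0 := by
    have hsub : (stabilizer G x).subgroupOf H = stabilizer H x := by ext; rfl
    rw [Subgroup.relIndex, hsub, index_stabilizer]
    exact (Set.ncard_pos hx).mpr ⟨x, mem_orbit_self x⟩ |>.ne'
  rw [← relIndex_top_right] at hH ⊢
  exact relIndex_ne_zero_trans hrel hH

namespace SemidirectProduct

variable {N G : Type*} [Group N] [Group G] {φ : G →* MulAut N}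

theorem mem_range_inr_iff {x : N ⋊[φ] G} : x ∈ (inr (φ := φ)).range ↔ x.left = 1 :=
  ⟨by rintro ⟨y, rfl⟩; rfl, fun h ↦ ⟨x.right, by ext <;> simp [h]⟩⟩

theorem comap_inr_map_conj_range_inr (g : N ⋊[φ] G) :
    ((inr (φ := φ)).range.map (MulAut.conj g).toMonoidHom).comap inr =
      (stabilizer (MulAut N) g.left).comap φ := by
  ext ε
  simp only [mem_comap, mem_map_equiv, mem_range_inr_iff, mem_stabilizer_iff, MulAut.smul_def,
    MulAut.conj_symm_apply, mul_left, mul_right, inv_left, inv_right, left_inr,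
    right_inr, map_one, mul_one, map_mul, MulAut.mul_apply, map_inv]
  rw [← map_inv, ← map_mul, map_eq_one_iff _ (MulEquiv.injective _), inv_mul_eq_one, eq_comm]

end SemidirectProduct

section Coinduced

variable {Γ X A₀ : Type*} [Group Γ] [Group A₀] [MulAction Γ X]
  {σ : Γ →* MulAut (finSupp X A₀)}

variable (σ) in
def PermutesCoordinates : Prop :=
  ∀ (g : Γ) (i : X), ∃ τ : MulAut A₀, ∀ x : finSupp X A₀,
    (σ g x : X → A₀) (g • i) = τ ((x : X → A₀) i)

theorem smul_mem_mulSupport_of_mem_stabilizer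
    (hσ : PermutesCoordinates σ)
    {a : finSupp X A₀} {ε : Γ} (hε : ε ∈ (stabilizer (MulAut _) a).comap σ) {i : X}
    (hi : i ∈ Function.mulSupport (a : X → A₀)) :
    ε • i ∈ Function.mulSupport (a : X → A₀) := by
  obtain ⟨τ, hτ⟩ := hσ ε i
  have hεa : σ ε a = a := hε
  rw [Function.mem_mulSupport, ← hεa, hτ]
  exact (map_ne_one_iff τ τ.injective).mpr hi

theorem eq_one_of_index_comap_stabilizer_ne_zero
    (hσ : PermutesCoordinates σ)
    (hX : ∀ i : X, (stabilizer Γ i).index = 0)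
    {a : finSupp X A₀} (ha : ((stabilizer (MulAut _) a).comap σ).index ≠ 0) : a = 1 := by
  by_contra hne
  obtain ⟨i, hi⟩ : (Function.mulSupport (a : X → A₀)).Nonempty :=
    Function.mulSupport_nonempty_iff.mpr fun h ↦ hne (Subtype.ext h)
  have horbit :
      orbit ((stabilizer (MulAut _) a).comap σ) i ⊆ Function.mulSupport (a : X → A₀) := by
    rintro _ ⟨ε, rfl⟩
    exact smul_mem_mulSupport_of_mem_stabilizer hσ ε.2 hi
  exact index_stabilizer_ne_zero_of_finite_orbit ha (a.2.subset horbit) (hX i)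

end Coinduced

/-- Let `Γ₀ ≤ Γ` with `[Γ : Γ₀] = ∞`, and let `G = A₀^{(I)} ⋊ Γ` be the coinduced group of an
action `Γ₀ ↷ A₀` (abstractly: a semidirect product for an action `σ` of `Γ` on the restricted
direct sum over `I = Γ ⧸ Γ₀` which permutes the coordinates with base automorphisms).
Then the one-sided commensurator of `Γ` in `G` equals `Γ`:
`{g ∈ G : [Γ : gΓg⁻¹ ∩ Γ] < ∞} = Γ`. -/
theorem stmt4 {Γ A₀ : Type*} [Group Γ] [Group A₀] (Γ₀ : Subgroup Γ)
    (hΓ₀ : Γ₀.index = 0)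
    (σ : Γ →* MulAut (finSupp (Γ ⧸ Γ₀) A₀))
    (hσ : ∀ (g : Γ) (i : Γ ⧸ Γ₀), ∃ τ : MulAut A₀, ∀ x : finSupp (Γ ⧸ Γ₀) A₀,
      ((σ g x : (Γ ⧸ Γ₀) → A₀)) (g • i) = τ ((x : (Γ ⧸ Γ₀) → A₀) i)) :
    ∀ g : finSupp (Γ ⧸ Γ₀) A₀ ⋊[σ] Γ,
      (Subgroup.map (MulAut.conj g).toMonoidHom
          (SemidirectProduct.inr (φ := σ)).range).relIndex
        (SemidirectProduct.inr (φ := σ)).range ≠ 0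
        ↔ g ∈ (SemidirectProduct.inr (φ := σ)).range := by
  intro g
  rw [← index_comap, SemidirectProduct.comap_inr_map_conj_range_inr,
    SemidirectProduct.mem_range_inr_iff]
  refine ⟨eq_one_of_index_comap_stabilizer_ne_zero hσ fun i ↦ ?_, fun h ↦ ?_⟩
  · rwa [index_stabilizer_of_transitive, ← index_eq_card]
  · have hstab : stabilizer (MulAut (finSupp (Γ ⧸ Γ₀) A₀)) g.left = ⊤ := by
      ext; simp [h]
    simp [hstab]
end

section
/- Let Γ₀ ≤ Γ with [Γ : Γ₀] = ∞ and Comm_Γ^{(1)}(Γ₀) = Γ₀. Let Γ₀ ↷ A₀ be an action by automorphisms with coinduced group G = A₀^{(I)} ⋊ Γ, and set G₀ = A₀ ⋊ Γ₀ ≤ G (A₀ embedded at the trivial-coset coordinate). Then Comm_G^{(1)}(Γ₀) = Comm_{G₀}^{(1)}(Γ₀). -/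
open Subgroup

theorem MulAction.relIndex_stabilizer_ne_zero_of_finite_orbit {G X : Type*} [Group G]
    [MulAction G X] {H : Subgroup G} {x : X} (hfin : (MulAction.orbit H x).Finite) :
    (MulAction.stabilizer G x).relIndex H ≠ 0 := by
  have hstab : (MulAction.stabilizer G x).subgroupOf H = MulAction.stabilizer H x := by
    ext; rfl
  rw [relIndex, hstab, MulAction.index_stabilizer]
  exact (Set.ncard_pos hfin).mpr ⟨x, MulAction.mem_orbit_self x⟩ |>.ne'

theorem QuotientGroup.stabilizer_mk {G : Type*} [Group G] (H : Subgroup G) (j : G) :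
    MulAction.stabilizer G (j : G ⧸ H) = H.map (MulAut.conj j).toMonoidHom := by
  have hj : (j : G ⧸ H) = j • ((1 : G) : G ⧸ H) := by
    rw [MulAction.Quotient.smul_mk, smul_eq_mul, mul_one]
  rw [hj, MulAction.stabilizer_smul_eq_stabilizer_map_conj, MulAction.stabilizer_quotient]

namespace SemidirectProduct

variable {N G : Type*} [Group N] [Group G] {φ : G →* MulAut N}

theorem conj_right_and_fixes_left_of_inr_mem {H : Subgroup G} {g : N ⋊[φ] G} {l : G}
    (hl : inr l ∈ (H.map (inr (φ := φ))).map (MulAut.conj g).toMonoidHom) :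
    l ∈ H.map (MulAut.conj g.right).toMonoidHom ∧ φ l g.left = g.left := by
  obtain ⟨_, ⟨δ, hδ, rfl⟩, hconj⟩ := hl
  simp only [MulEquiv.coe_toMonoidHom, MulAut.conj_apply] at hconj
  have heq : g * inr δ = inr l * g := by rw [← hconj]; group
  have hright : g.right * δ = l * g.right := by
    simpa using congrArg SemidirectProduct.right heq
  have hleft : g.left = φ l g.left := by
    simpa using congrArg SemidirectProduct.left heq
  refine ⟨⟨δ, hδ, ?_⟩, hleft.symm⟩
  simp only [MulEquiv.coe_toMonoidHom, MulAut.conj_apply, hright]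
  group

end SemidirectProduct

theorem finSupp.smul_mem_mulSupport_of_fixed {Γ I A₀ : Type*} [Group Γ] [MulAction Γ I]
    [Group A₀] {σ : Γ →* MulAut (finSupp I A₀)}
    (hσ : ∀ (g : Γ) (i : I), ∃ τ : MulAut A₀, ∀ x : finSupp I A₀,
      ((σ g x : I → A₀)) (g • i) = τ ((x : I → A₀) i))
    {l : Γ} {a : finSupp I A₀} (ha : σ l a = a) {i : I}
    (hi : i ∈ Function.mulSupport (a : I → A₀)) :
    l • i ∈ Function.mulSupport (a : I → A₀) := by
  obtain ⟨τ, hτ⟩ := hσ l i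
  rw [Function.mem_mulSupport, ← ha, hτ a]
  exact fun h => hi ((MulEquiv.map_eq_one_iff τ).mp h)

theorem stmt5_general {Γ A₀ : Type*} [Group Γ] [Group A₀] (Γ₀ : Subgroup Γ)
    (hcommΓ : ∀ γ : Γ,
      (Subgroup.map (MulAut.conj γ).toMonoidHom Γ₀).relIndex Γ₀ ≠ 0 ↔ γ ∈ Γ₀)
    (σ : Γ →* MulAut (finSupp (Γ ⧸ Γ₀) A₀))
    (hσ : ∀ (g : Γ) (i : Γ ⧸ Γ₀), ∃ τ : MulAut A₀, ∀ x : finSupp (Γ ⧸ Γ₀) A₀,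
      ((σ g x : (Γ ⧸ Γ₀) → A₀)) (g • i) = τ ((x : (Γ ⧸ Γ₀) → A₀) i)) :
    {g : finSupp (Γ ⧸ Γ₀) A₀ ⋊[σ] Γ |
        (Subgroup.map (MulAut.conj g).toMonoidHom
            (Subgroup.map (SemidirectProduct.inr (φ := σ)) Γ₀)).relIndex
          (Subgroup.map (SemidirectProduct.inr (φ := σ)) Γ₀) ≠ 0}
      = {g : finSupp (Γ ⧸ Γ₀) A₀ ⋊[σ] Γ |
          (Function.mulSupport (g.left : (Γ ⧸ Γ₀) → A₀) ⊆ {QuotientGroup.mk (1 : Γ)}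
              ∧ g.right ∈ Γ₀)
          ∧ (Subgroup.map (MulAut.conj g).toMonoidHom
                (Subgroup.map (SemidirectProduct.inr (φ := σ)) Γ₀)).relIndex
              (Subgroup.map (SemidirectProduct.inr (φ := σ)) Γ₀) ≠ 0} := by
  ext g
  refine ⟨fun hg => ⟨?_, hg⟩, And.right⟩
  set H := ((Γ₀.map (SemidirectProduct.inr (φ := σ))).map (MulAut.conj g).toMonoidHom).comap
    (SemidirectProduct.inr (φ := σ))
  have hH : H.relIndex Γ₀ ≠ 0 := by rwa [relIndex_comap]
  have hmem (l : Γ) (hl : l ∈ H) := SemidirectProduct.conj_right_and_fixes_left_of_inr_mem hl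
  have hright : g.right ∈ Γ₀ := (hcommΓ g.right).mp <|
    ne_zero_of_dvd_ne_zero hH (relIndex_dvd_of_le_left Γ₀ fun l hl => (hmem l hl).1)
  refine ⟨?_, hright⟩
  intro i hi
  obtain ⟨j, rfl⟩ := QuotientGroup.mk_surjective i
  have horbit : MulAction.orbit H (j : Γ ⧸ Γ₀) ⊆ Function.mulSupport (g.left : Γ ⧸ Γ₀ → A₀) := by
    rintro _ ⟨l, rfl⟩
    exact finSupp.smul_mem_mulSupport_of_fixed hσ (hmem l l.2).2 hi
  have hstab := MulAction.relIndex_stabilizer_ne_zero_of_finite_orbit (g.left.2.subset horbit)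
  rw [QuotientGroup.stabilizer_mk] at hstab
  have hj : j ∈ Γ₀ := (hcommΓ j).mp (relIndex_ne_zero_trans hstab hH)
  rw [Set.mem_singleton_iff, QuotientGroup.eq]
  simpa using hj

/-- Let `Γ₀ ≤ Γ` with `[Γ : Γ₀] = ∞` and `Comm_Γ^{(1)}(Γ₀) = Γ₀`.  Let `G = A₀^{(I)} ⋊ Γ`
be the coinduced group of an action `Γ₀ ↷ A₀` over `I = Γ ⧸ Γ₀`, and let
`G₀ = A₀ ⋊ Γ₀ ≤ G`, where `A₀` is embedded at the trivial-coset coordinate, so that as a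
subset of `G`, `G₀ = {(a, γ) : supp a ⊆ {Γ₀}, γ ∈ Γ₀}`.  Then
`Comm_G^{(1)}(Γ₀) = Comm_{G₀}^{(1)}(Γ₀)`, i.e. every element of `G` commensurating `Γ₀`
already lies in `G₀`.  Here `Γ₀` is regarded as the subgroup `Λ₀ = inr(Γ₀)` of `G`, and
commensuration of `Λ₀` by `g` means `[Λ₀ : gΛ₀g⁻¹ ∩ Λ₀] < ∞`. -/
theorem stmt5 {Γ A₀ : Type*} [Group Γ] [Group A₀] (Γ₀ : Subgroup Γ)
    (hΓ₀ : Γ₀.index = 0)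
    (hcommΓ : ∀ γ : Γ,
      (Subgroup.map (MulAut.conj γ).toMonoidHom Γ₀).relIndex Γ₀ ≠ 0 ↔ γ ∈ Γ₀)
    (σ : Γ →* MulAut (finSupp (Γ ⧸ Γ₀) A₀))
    (hσ : ∀ (g : Γ) (i : Γ ⧸ Γ₀), ∃ τ : MulAut A₀, ∀ x : finSupp (Γ ⧸ Γ₀) A₀,
      ((σ g x : (Γ ⧸ Γ₀) → A₀)) (g • i) = τ ((x : (Γ ⧸ Γ₀) → A₀) i)) :
    {g : finSupp (Γ ⧸ Γ₀) A₀ ⋊[σ] Γ |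
        (Subgroup.map (MulAut.conj g).toMonoidHom
            (Subgroup.map (SemidirectProduct.inr (φ := σ)) Γ₀)).relIndex
          (Subgroup.map (SemidirectProduct.inr (φ := σ)) Γ₀) ≠ 0}
      = {g : finSupp (Γ ⧸ Γ₀) A₀ ⋊[σ] Γ |
          (Function.mulSupport (g.left : (Γ ⧸ Γ₀) → A₀) ⊆ {QuotientGroup.mk (1 : Γ)}
              ∧ g.right ∈ Γ₀)
          ∧ (Subgroup.map (MulAut.conj g).toMonoidHom
                (Subgroup.map (SemidirectProduct.inr (φ := σ)) Γ₀)).relIndex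
              (Subgroup.map (SemidirectProduct.inr (φ := σ)) Γ₀) ≠ 0} :=
  stmt5_general Γ₀ hcommΓ σ hσ
end

section
/- Let G = A₀^{(I)} ⋊_σ Γ be the coinduced group of Γ₀ ↷ A₀, where A₀ is an icc group with trivial amenable radical and Stab_Γ(I) = 1. Then G has trivial amenable radical, i.e. G has no nontrivial amenable normal subgroup. -/
/-- A (discrete) group is amenable if it carries a left-invariant, finitely additive
probability measure defined on all subsets. -/
def IsAmenable (G : Type*) [Group G] : Prop :=
  ∃ μ : Set G → ℝ,
    (∀ s, 0 ≤ μ s) ∧ μ Set.univ = 1 ∧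
    (∀ s t : Set G, Disjoint s t → μ (s ∪ t) = μ s + μ t) ∧
    (∀ (g : G) (s : Set G), μ ((g * ·) '' s) = μ s)

/-- A group has trivial amenable radical if it has no nontrivial amenable normal subgroup. -/
def HasTrivialAmenableRadical (G : Type*) [Group G] : Prop :=
  ∀ D : Subgroup G, D.Normal → IsAmenable D → D = ⊥

open SemidirectProduct

/-!
A normal subgroup `D` of `A₀^{(I)} ⋊ Γ` meeting `A₀^{(I)}` trivially commutes with `A₀^{(I)}`,
so each `d ∈ D` acts on `A₀^{(I)}` by an inner automorphism; as `σ g` carries coordinate `i`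
to coordinate `g • i` and `Γ ↷ I` is faithful, this forces `d ∈ A₀^{(I)}`, hence `d = 1`.
So an amenable normal `D ≠ 1` meets `A₀^{(I)}` in an amenable normal subgroup `D₀ ≠ 1`, and
the image of `D₀` under some coordinate projection is a nontrivial amenable normal subgroup
of `A₀`.
-/

namespace IsAmenable

theorem of_equivariant {G H : Type*} [Group G] [Group H] (p : G → H)
    (hp : ∀ h : H, ∃ g : G, ∀ x, p (g * x) = h * p x) (hG : IsAmenable G) :
    IsAmenable H := by
  obtain ⟨μ, hpos, huniv, hadd, hinv⟩ := hG
  refine ⟨fun s => μ (p ⁻¹' s), fun s => hpos _, huniv,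
    fun s t hst => hadd _ _ (hst.preimage p), fun h s => ?_⟩
  obtain ⟨g, hg⟩ := hp h
  have hpre : p ⁻¹' ((h * ·) '' s) = (g * ·) '' (p ⁻¹' s) := by
    ext x
    have hx : p x = h * p (g⁻¹ * x) := by rw [← hg, mul_inv_cancel_left]
    simp only [Set.image_mul_left, Set.mem_preimage, hx, inv_mul_cancel_left]
  simp only [hpre, hinv]

theorem of_surjective {G H : Type*} [Group G] [Group H] (f : G →* H)
    (hf : Function.Surjective f) (hG : IsAmenable G) : IsAmenable H :=
  of_equivariant f (fun h => (hf h).imp fun g hg x => by rw [map_mul, hg]) hG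

theorem of_injective {H G : Type*} [Group H] [Group G] (f : H →* G)
    (hf : Function.Injective f) (hG : IsAmenable G) : IsAmenable H := by
  classical
  -- `r` picks a representative of each right coset `f.range * g`; then `g ↦ f⁻¹ (g * (r g)⁻¹)`
  -- is `H`-equivariant.
  let r : G → G := fun g => (Quotient.mk (QuotientGroup.rightRel f.range) g).out
  have hr : ∀ g, g * (r g)⁻¹ ∈ f.range := fun g =>
    QuotientGroup.rightRel_apply.mp (Quotient.mk_out (s := QuotientGroup.rightRel f.range) g)
  have hr_mul : ∀ h g, r (f h * g) = r g := fun h g =>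
    congrArg Quotient.out <| Quotient.sound <| QuotientGroup.rightRel_apply.mpr ⟨h⁻¹, by simp⟩
  let p : G → H := fun g => Function.invFun f (g * (r g)⁻¹)
  have hp : ∀ g, f (p g) = g * (r g)⁻¹ := fun g => Function.invFun_eq (hr g)
  refine of_equivariant p (fun h => ⟨f h, fun g => hf ?_⟩) hG
  rw [hp, map_mul, hp, hr_mul, mul_assoc]

theorem subgroup_map {G H : Type*} [Group G] [Group H] {D : Subgroup G} (f : G →* H)
    (hD : IsAmenable D) : IsAmenable (D.map f) :=
  of_surjective (f.subgroupMap D) (f.subgroupMap_surjective D) hD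

theorem subgroup_comap {G H : Type*} [Group G] [Group H] {D : Subgroup H} {f : G →* H}
    (hf : Function.Injective f) (hD : IsAmenable D) : IsAmenable (D.comap f) :=
  of_injective (f.subgroupComap D) (fun _ _ h => Subtype.ext (hf (congrArg Subtype.val h))) hD

end IsAmenable

namespace finSupp

variable {I A₀ : Type*} [Group A₀]

theorem mulSingle_mem [DecidableEq I] (i : I) (a : A₀) : Pi.mulSingle i a ∈ finSupp I A₀ :=
  (Set.finite_singleton i).subset Pi.mulSupport_mulSingle_subset

def eval (i : I) : finSupp I A₀ →* A₀ :=
  (Pi.evalMonoidHom (fun _ => A₀) i).comp (finSupp I A₀).subtype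

theorem eval_surjective (i : I) : Function.Surjective (eval i : finSupp I A₀ →* A₀) := by
  classical exact fun a => ⟨⟨_, mulSingle_mem i a⟩, by simp [eval]⟩

end finSupp

theorem HasTrivialAmenableRadical.finSupp {I A₀ : Type*} [Group A₀]
    (h : HasTrivialAmenableRadical A₀) : HasTrivialAmenableRadical (finSupp I A₀) := by
  intro D hD hDam
  refine (Subgroup.eq_bot_iff_forall D).mpr fun x hx => Subtype.ext (funext fun i => ?_)
  have hbot := h _ (hD.map _ (finSupp.eval_surjective i)) (hDam.subgroup_map (finSupp.eval i))
  have hxi : finSupp.eval i x ∈ D.map (finSupp.eval i) := Subgroup.mem_map_of_mem _ hx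
  rwa [hbot, Subgroup.mem_bot] at hxi

theorem SemidirectProduct.map_right_eq_conj_of_comap_inl_eq_bot {N G : Type*} [Group N]
    [Group G] {φ : G →* MulAut N} {D : Subgroup (N ⋊[φ] G)} (hD : D.Normal)
    (hDN : D.comap inl = ⊥) {d : N ⋊[φ] G} (hd : d ∈ D) : φ d.right = MulAut.conj d.left⁻¹ := by
  have hN : (inl : N →* N ⋊[φ] G).range.Normal := by
    rw [range_inl_eq_ker_rightHom]
    exact rightHom.normal_ker
  have hdisj : Disjoint (inl : N →* N ⋊[φ] G).range D := by
    rw [Subgroup.disjoint_def]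
    rintro _ ⟨n, rfl⟩ hn
    have hn' : n ∈ D.comap inl := hn
    rw [hDN, Subgroup.mem_bot] at hn'
    rw [hn', map_one]
  ext n
  have hcomm := Subgroup.commute_of_normal_of_disjoint _ _ hN hD hdisj (inl n) d ⟨n, rfl⟩ hd
  have hconj : d * inl n * d⁻¹ = inl (d.left * φ d.right n * d.left⁻¹) := by
    conv_lhs => rw [← inl_left_mul_inr_right d]
    simp only [inl_aut, map_mul, map_inv, mul_inv_rev, mul_assoc]
  rw [← hcomm.eq, mul_inv_cancel_right] at hconj
  calc φ d.right n = d.left⁻¹ * (d.left * φ d.right n * d.left⁻¹) * d.left := by group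
    _ = MulAut.conj d.left⁻¹ n := by rw [← inl_injective hconj, MulAut.conj_apply, inv_inv]

theorem eq_one_of_coinduced_eq_conj {Γ A₀ I : Type*} [Group Γ] [Group A₀] [Nontrivial A₀]
    [MulAction Γ I] (hfaith : ∀ g : Γ, (∀ i : I, g • i = i) → g = 1)
    (σ : Γ →* MulAut (finSupp I A₀))
    (hσ : ∀ (g : Γ) (i : I), ∃ τ : MulAut A₀, ∀ x : finSupp I A₀,
      ((σ g x : I → A₀)) (g • i) = τ ((x : I → A₀) i))
    {g : Γ} {l : finSupp I A₀} (h : σ g = MulAut.conj l) : g = 1 := by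
  classical
  refine hfaith g fun i => by_contra fun hi => ?_
  obtain ⟨b, hb⟩ := exists_ne (1 : A₀)
  obtain ⟨τ, hτ⟩ := hσ g i
  have := hτ ⟨_, finSupp.mulSingle_mem i b⟩
  simp only [h, MulAut.conj_apply, Subgroup.coe_mul, InvMemClass.coe_inv, Pi.mul_apply,
    Pi.mulSingle_eq_of_ne hi, mul_one, Pi.inv_apply, mul_inv_cancel, Pi.mulSingle_eq_same] at this
  exact hb ((map_eq_one_iff τ τ.injective).mp this.symm)

theorem stmt8_general {Γ A₀ I : Type*} [Group Γ] [Group A₀] [Nontrivial A₀] [MulAction Γ I]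
    (hrad : HasTrivialAmenableRadical A₀)
    (hfaith : ∀ g : Γ, (∀ i : I, g • i = i) → g = 1)
    (σ : Γ →* MulAut (finSupp I A₀))
    (hσ : ∀ (g : Γ) (i : I), ∃ τ : MulAut A₀, ∀ x : finSupp I A₀,
      ((σ g x : I → A₀)) (g • i) = τ ((x : I → A₀) i)) :
    HasTrivialAmenableRadical (finSupp I A₀ ⋊[σ] Γ) := by
  intro D hD hDam
  have hDN : D.comap inl = ⊥ :=
    hrad.finSupp _ (hD.comap inl) (hDam.subgroup_comap inl_injective)
  refine (Subgroup.eq_bot_iff_forall D).mpr fun d hd => ?_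
  have hright : d.right = 1 := eq_one_of_coinduced_eq_conj hfaith σ hσ
    (map_right_eq_conj_of_comap_inl_eq_bot hD hDN hd)
  have hleft : d.left ∈ D.comap inl := by
    rwa [Subgroup.mem_comap, ← mul_one (inl d.left), ← map_one inr, ← hright,
      inl_left_mul_inr_right]
  rw [hDN, Subgroup.mem_bot] at hleft
  rw [← inl_left_mul_inr_right d, hright, hleft, map_one, map_one, mul_one]

/-- Let `G = A₀^{(I)} ⋊_σ Γ` be the coinduced group of `Γ₀ ↷ A₀` (abstractly: a semidirect
product for an action `σ` of `Γ` on the restricted direct sum over `I` which permutes the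
coordinates with base automorphisms), where `A₀` is an icc group with trivial amenable
radical and `Γ ↷ I` is faithful.  Then `G` has trivial amenable radical. -/
theorem stmt8 {Γ A₀ I : Type*} [Group Γ] [Group A₀] [Nontrivial A₀] [MulAction Γ I]
    (hicc : ∀ a : A₀, a ≠ 1 → {b : A₀ | ∃ k : A₀, k * a * k⁻¹ = b}.Infinite)
    (hrad : HasTrivialAmenableRadical A₀)
    (hfaith : ∀ g : Γ, (∀ i : I, g • i = i) → g = 1)
    (σ : Γ →* MulAut (finSupp I A₀))
    (hσ : ∀ (g : Γ) (i : I), ∃ τ : MulAut A₀, ∀ x : finSupp I A₀,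
      ((σ g x : I → A₀)) (g • i) = τ ((x : I → A₀) i)) :
    HasTrivialAmenableRadical (finSupp I A₀ ⋊[σ] Γ) :=
  stmt8_general hrad hfaith σ hσ
end

section
/- Let G = A₀ ≀_I Γ be a generalized wreath product (trivial base action) with A₀ icc, and let F ⊆ I. Then the virtual centralizer of A₀^{(F)} in G is contained in A₀^{(I∖F)} ⋊ Stab_Γ(F), i.e. vC_G(A₀^{(F)}) ≤ A₀^{(I∖F)} ⋊ Stab_Γ(F). -/
/-- Let `G = A₀ ≀_I Γ` be a generalized wreath product (trivial base action: `σ` purely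
permutes the coordinates along `Γ ↷ I`) with `A₀` icc, and let `F ⊆ I`.  Then the virtual
centralizer of `A₀^{(F)}` in `G` is contained in `A₀^{(I∖F)} ⋊ Stab_Γ(F)`: any `g ∈ G`
whose conjugacy orbit under `A₀^{(F)}` is finite has left part supported in `I ∖ F` and
right part fixing `F` pointwise. -/
theorem stmt9 {Γ A₀ I : Type*} [Group Γ] [Group A₀] [Nontrivial A₀] [MulAction Γ I]
    (hicc : ∀ a : A₀, a ≠ 1 → {b : A₀ | ∃ k : A₀, k * a * k⁻¹ = b}.Infinite)
    (σ : Γ →* MulAut (finSupp I A₀))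
    (hσ : ∀ (g : Γ) (x : finSupp I A₀) (i : I),
      ((σ g x : I → A₀)) (g • i) = (x : I → A₀) i)
    (F : Set I) (g : finSupp I A₀ ⋊[σ] Γ)
    (hg : {x : finSupp I A₀ ⋊[σ] Γ | ∃ h : finSupp I A₀,
        Function.mulSupport (h : I → A₀) ⊆ F ∧
          SemidirectProduct.inl h * g * (SemidirectProduct.inl h)⁻¹ = x}.Finite) :
    Function.mulSupport (g.left : I → A₀) ⊆ Fᶜ ∧ ∀ i ∈ F, g.right • i = i := by
  classical
  obtain ⟨a₀, ha₀⟩ := exists_ne (1 : A₀)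
  have hInf : Infinite A₀ :=
    Set.infinite_univ_iff.mp ((hicc a₀ ha₀).mono (Set.subset_univ _))
  set a : finSupp I A₀ := g.left with ha
  set γ : Γ := g.right with hγ
  have hσ' : ∀ (x : finSupp I A₀) (j : I),
      ((σ γ x : I → A₀)) j = (x : I → A₀) (γ⁻¹ • j) := by
    intro x j
    have := hσ γ x (γ⁻¹ • j)
    rwa [smul_inv_smul] at this
  -- the single-coordinate elements
  have hsupp : ∀ (i : I) (k : A₀),
      Function.mulSupport (Pi.mulSingle i k) ⊆ ({i} : Set I) :=
    fun i k => Pi.mulSupport_mulSingle_subset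
  set e : I → A₀ → finSupp I A₀ := fun i k =>
    ⟨Pi.mulSingle i k, (Set.finite_singleton i).subset (hsupp i k)⟩ with he
  set c : I → A₀ → (finSupp I A₀ ⋊[σ] Γ) := fun i k =>
    SemidirectProduct.inl (e i k) * g * (SemidirectProduct.inl (e i k))⁻¹ with hc
  have hmem : ∀ i ∈ F, ∀ k : A₀, c i k ∈ {x : finSupp I A₀ ⋊[σ] Γ | ∃ h : finSupp I A₀,
        Function.mulSupport (h : I → A₀) ⊆ F ∧
          SemidirectProduct.inl h * g * (SemidirectProduct.inl h)⁻¹ = x} := by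
    intro i hi k
    exact ⟨e i k, (hsupp i k).trans (by simpa using hi), rfl⟩
  have hcleft : ∀ (i : I) (k : A₀),
      (((c i k).left : I → A₀)) i = k * ((a : I → A₀) i) * ((Pi.mulSingle i k⁻¹ : I → A₀) (γ⁻¹ • i)) := by
    intro i k
    have h1 : (c i k).left = e i k * a * σ γ (e i k)⁻¹ := by
      simp [hc, ha, hγ, mul_assoc]
    have h2 : ((σ γ (e i k)⁻¹ : I → A₀)) i = (Pi.mulSingle i k⁻¹ : I → A₀) (γ⁻¹ • i) := by
      rw [hσ']
      have hx : ((e i k)⁻¹ : I → A₀) = Pi.mulSingle i k⁻¹ := by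
        have : ((e i k)⁻¹ : I → A₀) = (Pi.mulSingle i k : I → A₀)⁻¹ := rfl
        rw [this, ← Pi.mulSingle_inv]
      exact congrFun hx _
    calc (((c i k).left : I → A₀)) i
        = ((e i k : I → A₀) i) * ((a : I → A₀) i) * ((σ γ (e i k)⁻¹ : I → A₀)) i := by
          rw [h1]; simp
      _ = k * ((a : I → A₀) i) * ((Pi.mulSingle i k⁻¹ : I → A₀) (γ⁻¹ • i)) := by
          rw [h2]; simp [he]
  -- finiteness of values at coordinate i
  have hfin : ∀ i : I, (Set.range (fun k : A₀ => (((c i k).left : I → A₀)) i)).Finite → True := fun _ _ => trivial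
  have key : ∀ i ∈ F, ¬ (Set.range (fun k : A₀ => (((c i k).left : I → A₀)) i)).Infinite := by
    intro i hi hinf
    have : Set.range (fun k : A₀ => (((c i k).left : I → A₀)) i) ⊆
        (fun x : finSupp I A₀ ⋊[σ] Γ => ((x.left : I → A₀)) i) '' {x | ∃ h : finSupp I A₀,
        Function.mulSupport (h : I → A₀) ⊆ F ∧
          SemidirectProduct.inl h * g * (SemidirectProduct.inl h)⁻¹ = x} := by
      rintro _ ⟨k, rfl⟩
      exact ⟨c i k, hmem i hi k, rfl⟩
    exact hinf ((hg.image _).subset this)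
  -- second part: γ fixes F
  have hright : ∀ i ∈ F, γ • i = i := by
    intro i hi
    by_contra hne
    apply key i hi
    have hne' : γ⁻¹ • i ≠ i := by
      intro h
      apply hne
      conv_lhs => rw [← h]
      exact smul_inv_smul γ i
    have heq : (fun k : A₀ => (((c i k).left : I → A₀)) i) = fun k => k * ((a : I → A₀) i) := by
      funext k
      rw [hcleft]
      rw [Pi.mulSingle_eq_of_ne hne']
      simp
    rw [heq]
    exact Set.infinite_range_of_injective (fun x y h => by simpa using h)
  refine ⟨?_, fun i hi => hright i hi⟩
  intro i hi
  simp only [Set.mem_compl_iff]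
  intro hiF
  apply key i hiF
  have hγi : γ⁻¹ • i = i := inv_smul_eq_iff.mpr (hright i hiF).symm
  have heq : (fun k : A₀ => (((c i k).left : I → A₀)) i) =
      fun k => k * ((a : I → A₀) i) * k⁻¹ := by
    funext k
    rw [hcleft, hγi, Pi.mulSingle_eq_same]
  rw [heq]
  exact hicc _ hi
end

section
/- Let A₁, A₂, B₁, B₂ be nontrivial groups that are directly indecomposable (each admits no nontrivial direct product decomposition) and have trivial center (or are icc). If θ : A₁ × A₂ ≃ B₁ × B₂ is a group isomorphism, then either θ(A₁ × 1) = B₁ × 1 and θ(1 × A₂) = 1 × B₂, or θ(A₁ × 1) = 1 × B₂ and θ(1 × A₂) = B₁ × 1. -/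
/-- A group is directly indecomposable if it is nontrivial and admits no nontrivial
(internal) direct product decomposition. -/
def DirectlyIndecomposable (G : Type*) [Group G] : Prop :=
  Nontrivial G ∧ ∀ H K : Subgroup G, H.Normal → K.Normal →
    H ⊓ K = ⊥ → H ⊔ K = ⊤ → H = ⊥ ∨ K = ⊥

/-- Key lemma: given two normal, disjoint, jointly generating subgroups of `G` and a
surjection `π : G →* B` onto a centerless directly indecomposable group, the image of
one of the two subgroups is trivial. -/
lemma key_proj {G B : Type*} [Group G] [Group B] (hB : DirectlyIndecomposable B)
    (hz : Subgroup.center B = ⊥) (π : G →* B) (hπ : Function.Surjective π)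
    (C₁ C₂ : Subgroup G) (h₁ : C₁.Normal) (h₂ : C₂.Normal)
    (hinf : C₁ ⊓ C₂ = ⊥) (hsup : C₁ ⊔ C₂ = ⊤) :
    Subgroup.map π C₁ = ⊥ ∨ Subgroup.map π C₂ = ⊥ := by
  have hcomm : ∀ x ∈ C₁, ∀ y ∈ C₂, Commute x y := fun x hx y hy =>
    Subgroup.commute_of_normal_of_disjoint C₁ C₂ h₁ h₂ (disjoint_iff.mpr hinf) x y hx hy
  set D₁ := Subgroup.map π C₁ with hD₁
  set D₂ := Subgroup.map π C₂ with hD₂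
  have hDcomm : ∀ x ∈ D₁, ∀ y ∈ D₂, Commute x y := by
    rintro _ ⟨x, hx, rfl⟩ _ ⟨y, hy, rfl⟩
    exact (hcomm x hx y hy).map π
  have hn₁ : D₁.Normal := h₁.map π hπ
  have hn₂ : D₂.Normal := h₂.map π hπ
  have hDsup : D₁ ⊔ D₂ = ⊤ := by
    rw [hD₁, hD₂, ← Subgroup.map_sup, hsup, Subgroup.map_top_of_surjective π hπ]
  have hDinf : D₁ ⊓ D₂ = ⊥ := by
    rw [← hz]
    apply le_antisymm
    · intro x hx
      rw [Subgroup.mem_center_iff]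
      intro y
      have hy : y ∈ D₁ ⊔ D₂ := hDsup ▸ Subgroup.mem_top y
      have hle : D₁ ⊔ D₂ ≤ Subgroup.centralizer {x} := by
        apply sup_le
        · intro d hd
          rw [Subgroup.mem_centralizer_singleton_iff]
          exact (hDcomm d hd x hx.2).eq
        · intro d hd
          rw [Subgroup.mem_centralizer_singleton_iff]
          exact (hDcomm x hx.1 d hd).eq.symm
      have := hle hy
      rw [Subgroup.mem_centralizer_singleton_iff] at this
      exact this
    · rw [hz]; exact bot_le
  exact hB.2 D₁ D₂ hn₁ hn₂ hDinf hDsup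


lemma factor_eq {B₁ B₂ : Type*} [Group B₁] [Group B₂] (C₁ C₂ : Subgroup (B₁ × B₂))
    (h1 : Subgroup.map (MonoidHom.snd B₁ B₂) C₁ = ⊥)
    (h2 : Subgroup.map (MonoidHom.fst B₁ B₂) C₂ = ⊥)
    (hsup : C₁ ⊔ C₂ = ⊤) :
    C₁ = (MonoidHom.inl B₁ B₂).range ∧ C₂ = (MonoidHom.inr B₁ B₂).range := by
  rw [Subgroup.map_eq_bot_iff] at h1 h2
  have hfst : Subgroup.map (MonoidHom.fst B₁ B₂) C₁ = ⊤ := by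
    have : Subgroup.map (MonoidHom.fst B₁ B₂) (C₁ ⊔ C₂) = ⊤ := by
      rw [hsup]; exact Subgroup.map_top_of_surjective _ (fun b => ⟨(b, 1), rfl⟩)
    rwa [Subgroup.map_sup, (Subgroup.map_eq_bot_iff _).mpr h2, sup_bot_eq] at this
  have hsnd : Subgroup.map (MonoidHom.snd B₁ B₂) C₂ = ⊤ := by
    have : Subgroup.map (MonoidHom.snd B₁ B₂) (C₁ ⊔ C₂) = ⊤ := by
      rw [hsup]; exact Subgroup.map_top_of_surjective _ (fun b => ⟨(1, b), rfl⟩)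
    rwa [Subgroup.map_sup, (Subgroup.map_eq_bot_iff _).mpr h1, bot_sup_eq] at this
  constructor
  · ext ⟨b₁, b₂⟩
    constructor
    · intro hx
      have := h1 hx
      rw [MonoidHom.mem_ker] at this
      exact ⟨b₁, by simp_all⟩
    · rintro ⟨a, ha⟩
      obtain ⟨⟨c₁, c₂⟩, hc, hc1⟩ : b₁ ∈ Subgroup.map (MonoidHom.fst B₁ B₂) C₁ := by
        rw [hfst]; trivial
      have hc2 : c₂ = 1 := h1 hc
      have : (b₁, b₂) = (c₁, c₂) := by
        simp only [MonoidHom.inl_apply, Prod.mk.injEq] at ha hc1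
        exact Prod.ext (by simp [← hc1]) (by simp [hc2, ← ha.2])
      rw [this]; exact hc
  · ext ⟨b₁, b₂⟩
    constructor
    · intro hx
      have := h2 hx
      rw [MonoidHom.mem_ker] at this
      exact ⟨b₂, by simp_all⟩
    · rintro ⟨a, ha⟩
      obtain ⟨⟨c₁, c₂⟩, hc, hc2⟩ : b₂ ∈ Subgroup.map (MonoidHom.snd B₁ B₂) C₂ := by
        rw [hsnd]; trivial
      have hc1 : c₁ = 1 := h2 hc
      have : (b₁, b₂) = (c₁, c₂) := by
        simp only [MonoidHom.inr_apply, Prod.mk.injEq] at ha hc2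
        exact Prod.ext (by simp [hc1, ← ha.1]) (by simp [← hc2])
      rw [this]; exact hc

lemma bot_of_projs {B₁ B₂ : Type*} [Group B₁] [Group B₂] (C : Subgroup (B₁ × B₂))
    (h1 : Subgroup.map (MonoidHom.fst B₁ B₂) C = ⊥)
    (h2 : Subgroup.map (MonoidHom.snd B₁ B₂) C = ⊥) : C = ⊥ := by
  rw [Subgroup.map_eq_bot_iff] at h1 h2
  rw [eq_bot_iff]
  intro x hx
  have e1 : x.1 = 1 := h1 hx
  have e2 : x.2 = 1 := h2 hx
  simpa [Subgroup.mem_bot] using Prod.ext e1 e2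

lemma range_inl_eq_ker {B₁ B₂ : Type*} [Group B₁] [Group B₂] :
    (MonoidHom.inl B₁ B₂).range = (MonoidHom.snd B₁ B₂).ker := by
  ext ⟨b₁, b₂⟩
  simp [MonoidHom.mem_range, MonoidHom.mem_ker, Prod.ext_iff, eq_comm, Subgroup.mem_prod, Subgroup.mem_bot]

lemma range_inr_eq_ker {B₁ B₂ : Type*} [Group B₁] [Group B₂] :
    (MonoidHom.inr B₁ B₂).range = (MonoidHom.fst B₁ B₂).ker := by
  ext ⟨b₁, b₂⟩
  simp [MonoidHom.mem_range, MonoidHom.mem_ker, Prod.ext_iff, eq_comm, Subgroup.mem_prod, Subgroup.mem_bot]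

lemma range_sup_range {B₁ B₂ : Type*} [Group B₁] [Group B₂] :
    (MonoidHom.inl B₁ B₂).range ⊔ (MonoidHom.inr B₁ B₂).range = ⊤ := by
  rw [eq_top_iff]
  rintro ⟨b₁, b₂⟩ -
  have : (b₁, b₂) = (b₁, (1 : B₂)) * ((1 : B₁), b₂) := by simp
  rw [this]
  exact mul_mem (Subgroup.mem_sup_left ⟨b₁, rfl⟩) (Subgroup.mem_sup_right ⟨b₂, rfl⟩)

lemma range_inf_range {B₁ B₂ : Type*} [Group B₁] [Group B₂] :
    (MonoidHom.inl B₁ B₂).range ⊓ (MonoidHom.inr B₁ B₂).range = ⊥ := by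
  rw [eq_bot_iff]
  rintro ⟨b₁, b₂⟩ ⟨⟨a, ha⟩, ⟨b, hb⟩⟩
  simp only [MonoidHom.inl_apply, MonoidHom.inr_apply, Prod.mk.injEq] at ha hb
  simp [Subgroup.mem_bot, Prod.ext_iff, ← ha.2, ← hb.1]

/-- Let `A₁, A₂, B₁, B₂` be nontrivial, directly indecomposable groups with trivial center.
If `θ : A₁ × A₂ ≃ B₁ × B₂` is a group isomorphism, then either `θ(A₁ × 1) = B₁ × 1` and
`θ(1 × A₂) = 1 × B₂`, or `θ(A₁ × 1) = 1 × B₂` and `θ(1 × A₂) = B₁ × 1`. -/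
theorem stmt10 {A₁ A₂ B₁ B₂ : Type*} [Group A₁] [Group A₂] [Group B₁] [Group B₂]
    (hA₁ : DirectlyIndecomposable A₁) (hA₂ : DirectlyIndecomposable A₂)
    (hB₁ : DirectlyIndecomposable B₁) (hB₂ : DirectlyIndecomposable B₂)
    (hzA₁ : Subgroup.center A₁ = ⊥) (hzA₂ : Subgroup.center A₂ = ⊥)
    (hzB₁ : Subgroup.center B₁ = ⊥) (hzB₂ : Subgroup.center B₂ = ⊥)
    (θ : A₁ × A₂ ≃* B₁ × B₂) :
    (Subgroup.map θ.toMonoidHom (MonoidHom.inl A₁ A₂).range = (MonoidHom.inl B₁ B₂).range ∧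
     Subgroup.map θ.toMonoidHom (MonoidHom.inr A₁ A₂).range = (MonoidHom.inr B₁ B₂).range) ∨
    (Subgroup.map θ.toMonoidHom (MonoidHom.inl A₁ A₂).range = (MonoidHom.inr B₁ B₂).range ∧
     Subgroup.map θ.toMonoidHom (MonoidHom.inr A₁ A₂).range = (MonoidHom.inl B₁ B₂).range) := by
  set C₁ := Subgroup.map θ.toMonoidHom (MonoidHom.inl A₁ A₂).range with hC₁
  set C₂ := Subgroup.map θ.toMonoidHom (MonoidHom.inr A₁ A₂).range with hC₂
  have hθs : Function.Surjective θ.toMonoidHom := θ.surjective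
  have hθi : Function.Injective θ.toMonoidHom := θ.injective
  have hn₁ : C₁.Normal := by
    have : (MonoidHom.inl A₁ A₂).range.Normal := by
      rw [range_inl_eq_ker]; exact MonoidHom.normal_ker _
    exact this.map θ.toMonoidHom hθs
  have hn₂ : C₂.Normal := by
    have : (MonoidHom.inr A₁ A₂).range.Normal := by
      rw [range_inr_eq_ker]; exact MonoidHom.normal_ker _
    exact this.map θ.toMonoidHom hθs
  have hsup : C₁ ⊔ C₂ = ⊤ := by
    rw [hC₁, hC₂, ← Subgroup.map_sup, range_sup_range,
      Subgroup.map_top_of_surjective _ hθs]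
  have hinf : C₁ ⊓ C₂ = ⊥ := by
    rw [eq_bot_iff]
    rintro x ⟨⟨y₁, hy₁, hxy₁⟩, ⟨y₂, hy₂, hxy₂⟩⟩
    have : y₁ = y₂ := hθi (hxy₁.trans hxy₂.symm)
    have hy : y₁ ∈ (MonoidHom.inl A₁ A₂).range ⊓ (MonoidHom.inr A₁ A₂).range :=
      ⟨hy₁, this ▸ hy₂⟩
    rw [range_inf_range, Subgroup.mem_bot] at hy
    simp [Subgroup.mem_bot, ← hxy₁, hy]
  have hne₁ : C₁ ≠ ⊥ := by
    intro h
    rw [hC₁, Subgroup.map_eq_bot_iff, (MonoidHom.ker_eq_bot_iff _).mpr hθi, le_bot_iff, eq_bot_iff] at h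
    obtain ⟨a, ha⟩ := @exists_ne A₁ hA₁.1 1
    have : ((a, 1) : A₁ × A₂) ∈ (MonoidHom.inl A₁ A₂).range := ⟨a, rfl⟩
    have := h this
    rw [Subgroup.mem_bot, Prod.ext_iff] at this
    exact ha this.1
  have hne₂ : C₂ ≠ ⊥ := by
    intro h
    rw [hC₂, Subgroup.map_eq_bot_iff, (MonoidHom.ker_eq_bot_iff _).mpr hθi, le_bot_iff, eq_bot_iff] at h
    obtain ⟨a, ha⟩ := @exists_ne A₂ hA₂.1 1
    have : ((1, a) : A₁ × A₂) ∈ (MonoidHom.inr A₁ A₂).range := ⟨a, rfl⟩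
    have := h this
    rw [Subgroup.mem_bot, Prod.ext_iff] at this
    exact ha this.2
  have hd2 := key_proj hB₂ hzB₂ (MonoidHom.snd B₁ B₂)
    (fun b => ⟨(1, b), rfl⟩) C₁ C₂ hn₁ hn₂ hinf hsup
  have hd1 := key_proj hB₁ hzB₁ (MonoidHom.fst B₁ B₂)
    (fun b => ⟨(b, 1), rfl⟩) C₁ C₂ hn₁ hn₂ hinf hsup
  rcases hd2 with h | h
  · rcases hd1 with h' | h'
    · exact absurd (bot_of_projs C₁ h' h) hne₁
    · exact Or.inl (factor_eq C₁ C₂ h h' hsup)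
  · rcases hd1 with h' | h'
    · have := factor_eq C₂ C₁ h h' (by rwa [sup_comm])
      exact Or.inr ⟨this.2, this.1⟩
    · exact absurd (bot_of_projs C₂ h' h) hne₂
end

section
/- Let Γ be a group with finite abelianization Γ/[Γ,Γ] (e.g. a property (T) group), let Γ₁, …, Γₙ be copies of Γ, let Γ act on the free product A = Γ₁ ∗ ⋯ ∗ Γₙ by the free product ρ of the conjugation actions, and let G = A ⋊_ρ Γ. Then G has finite abelianization G/[G,G]; in particular the character group Hom(G, 𝕋) is finite. -/
/-!
The abelianization of a group generated by finitely many subgroups is generated by their images,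
and the image of such a subgroup `H` in an abelian group is a quotient of `H/[H,H]`.  A semidirect
product `A ⋊ Γ` is generated by `A` and `Γ`, and the free product `A` by its `n` factors, so
`G/[G,G]` is a quotient of `(Γ/[Γ,Γ])ⁿ⁺¹`.  Characters of `G` factor through the finite group
`G/[G,G]`, where they take values in the roots of unity of order dividing its exponent.
-/

namespace Abelianization

variable {G H : Type*} [Group G] [Group H]

theorem of_surjective : Function.Surjective (of : G →* Abelianization G) :=
  QuotientGroup.mk'_surjective _

theorem range_map (f : H →* G) : (map f).range = f.range.map of := by
  have hcomp : (map f).comp of = of.comp f := rfl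
  rw [MonoidHom.map_range, ← hcomp, ← MonoidHom.map_range, MonoidHom.range_eq_top.2 of_surjective,
    ← MonoidHom.range_eq_map]

theorem finite_of_sup_range_eq_top {H₁ H₂ : Type*} [Group H₁] [Group H₂]
    [Finite (Abelianization H₁)] [Finite (Abelianization H₂)] (f₁ : H₁ →* G) (f₂ : H₂ →* G)
    (h : f₁.range ⊔ f₂.range = ⊤) : Finite (Abelianization G) := by
  let F := (map f₁).noncommCoprod (map f₂) fun _ _ ↦ Commute.all _ _
  have hF : F.range = ⊤ := by
    rw [MonoidHom.noncommCoprod_range, range_map, range_map, ← Subgroup.map_sup, h,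
      Subgroup.map_top_of_surjective _ of_surjective]
  exact Finite.of_surjective F (MonoidHom.range_eq_top.1 hF)

theorem finite_of_iSup_range_eq_top {ι : Type*} [Finite ι] {H : ι → Type*} [∀ i, Group (H i)]
    [∀ i, Finite (Abelianization (H i))] (f : ∀ i, H i →* G) (h : ⨆ i, (f i).range = ⊤) :
    Finite (Abelianization G) := by
  cases nonempty_fintype ι
  have hcomm : Pairwise fun i j ↦ ∀ x y, Commute (map (f i) x) (map (f j) y) :=
    fun _ _ _ _ _ ↦ Commute.all _ _
  have hF : (MonoidHom.noncommPiCoprod _ hcomm).range = ⊤ := by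
    simp only [MonoidHom.noncommPiCoprod_range, range_map, ← Subgroup.map_iSup, h,
      Subgroup.map_top_of_surjective _ of_surjective]
  exact Finite.of_surjective _ (MonoidHom.range_eq_top.1 hF)

end Abelianization

namespace Monoid.CoprodI

variable {ι : Type*} {G : ι → Type*} [∀ i, Group (G i)]

theorem iSup_range_of : ⨆ i, (of : G i →* CoprodI G).range = ⊤ := by
  refine (Subgroup.eq_top_iff' _).2 fun x ↦ ?_
  induction x using CoprodI.induction_on with
  | one => exact one_mem _
  | of i g => exact Subgroup.mem_iSup_of_mem i ⟨g, rfl⟩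
  | mul x y hx hy => exact mul_mem hx hy

instance [Finite ι] [∀ i, Finite (Abelianization (G i))] :
    Finite (Abelianization (CoprodI G)) :=
  Abelianization.finite_of_iSup_range_eq_top _ iSup_range_of

end Monoid.CoprodI

namespace SemidirectProduct

variable {N H : Type*} [Group N] [Group H] {φ : H →* MulAut N}

theorem range_inl_sup_range_inr : (inl : N →* N ⋊[φ] H).range ⊔ inr.range = ⊤ := by
  refine eq_top_iff.2 fun x _ ↦ ?_
  rw [← inl_left_mul_inr_right x]
  exact mul_mem (Subgroup.mem_sup_left ⟨_, rfl⟩) (Subgroup.mem_sup_right ⟨_, rfl⟩)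

instance [Finite (Abelianization N)] [Finite (Abelianization H)] :
    Finite (Abelianization (N ⋊[φ] H)) :=
  Abelianization.finite_of_sup_range_eq_top _ _ range_inl_sup_range_inr

end SemidirectProduct

theorem finite_monoidHom_circle {G : Type*} [Group G] [Finite (Abelianization G)] :
    Finite (G →* Circle) := by
  have : Finite (Abelianization G →* Circle) :=
    Finite.of_injective (Circle.toUnits.comp ·) fun φ ψ h ↦ MonoidHom.ext fun x ↦
      Circle.ext (congrArg Units.val (DFunLike.congr_fun h x))
  exact Finite.of_equiv _ Abelianization.lift.symm

theorem stmt11_general {Γ : Type*} [Group Γ] (n : ℕ)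
    (hΓ : Finite (Abelianization Γ))
    (ρ : Γ →* MulAut (Monoid.CoprodI (fun _ : Fin n => Γ))) :
    Finite (Abelianization (Monoid.CoprodI (fun _ : Fin n => Γ) ⋊[ρ] Γ)) ∧
    Finite ((Monoid.CoprodI (fun _ : Fin n => Γ) ⋊[ρ] Γ) →* Circle) :=
  ⟨inferInstance, finite_monoidHom_circle⟩

/-- Let `Γ` be a group with finite abelianization (e.g. a property (T) group), let
`A = Γ₁ ∗ ⋯ ∗ Γₙ` be the free product of `n` copies of `Γ`, and let `Γ` act on `A` by the
free product `ρ` of the conjugation actions (so `ρ_γ` sends the element `x` of the `i`-th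
free factor to `γ x γ⁻¹`).  Then the semidirect product `G = A ⋊_ρ Γ` has finite
abelianization; in particular its character group `Hom(G, 𝕋)` is finite. -/
theorem stmt11 {Γ : Type*} [Group Γ] (n : ℕ)
    (hΓ : Finite (Abelianization Γ))
    (ρ : Γ →* MulAut (Monoid.CoprodI (fun _ : Fin n => Γ)))
    (hρ : ∀ (γ : Γ) (i : Fin n) (x : Γ),
      ρ γ (Monoid.CoprodI.of (M := fun _ : Fin n => Γ) (i := i) x)
        = Monoid.CoprodI.of (M := fun _ : Fin n => Γ) (i := i) (γ * x * γ⁻¹)) :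
    Finite (Abelianization (Monoid.CoprodI (fun _ : Fin n => Γ) ⋊[ρ] Γ)) ∧
    Finite ((Monoid.CoprodI (fun _ : Fin n => Γ) ⋊[ρ] Γ) →* Circle) :=
  stmt11_general n hΓ ρ
end

section
/- The relation of commensurability up to finite kernels is an equivalence relation on (isomorphism classes of) groups: G ≅_fk H iff there exist finite index subgroups G₁ ≤ G, H₁ ≤ H and finite normal subgroups M₁ ⊴ G₁, N₁ ⊴ H₁ with G₁/M₁ ≅ H₁/N₁. In particular, ≅_fk is reflexive, symmetric, and transitive. -/
/-- Two groups are commensurable up to finite kernels, `G ≅_fk H`, if there exist finite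
index subgroups `G₁ ≤ G`, `H₁ ≤ H` and finite normal subgroups `M₁ ⊴ G₁`, `N₁ ⊴ H₁` with
`G₁/M₁ ≅ H₁/N₁`. -/
def CommensurableUpToFiniteKernels (G H : Type*) [Group G] [Group H] : Prop :=
  ∃ (G₁ : Subgroup G) (H₁ : Subgroup H) (M₁ : Subgroup G₁) (N₁ : Subgroup H₁)
    (hM : M₁.Normal) (hN : N₁.Normal),
    G₁.index ≠ 0 ∧ H₁.index ≠ 0 ∧ Finite M₁ ∧ Finite N₁ ∧
    (haveI := hM; haveI := hN; Nonempty ((G₁ ⧸ M₁) ≃* (H₁ ⧸ N₁)))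

/-!
Say `G` and `H` are isomorphic up to finite kernels if `G ⧸ M ≃* H ⧸ N` for finite normal `M`,
`N`, i.e. if both map onto a common group with finite kernels. This relation is transitive:
given `G ↠ H ⧸ N₁` and `K ↠ H ⧸ N₂`, push both on to `H ⧸ (N₁ ⊔ N₂)`; here `N₁ ⊔ N₂` is finite,
and composites of homomorphisms with finite kernels have finite kernels. It also descends to
finite-index subgroups: the preimage of the image of a finite-index `H' ≤ H` under `G ↠ H ⧸ N`
is a finite-index `G' ≤ G` with the same image as `H'`. Transitivity of `≅_fk` follows by
restricting both relations to the finite-index subgroup `H₁ ⊓ H₂` of the middle group.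
-/

open QuotientGroup

section FiniteKernel

variable {G H Q : Type*} [Group G] [Group H] [Group Q]

theorem Subgroup.finite_comap_of_finite_ker (f : G →* H) [Finite f.ker] (K : Subgroup H)
    [Finite K] : Finite (K.comap f) := by
  have : Finite (f.subgroupComap K).ker :=
    Finite.of_injective (fun x => (⟨x.1.1, Subtype.ext_iff.1 x.2⟩ : f.ker))
      fun _ _ h => by ext; simpa using congrArg Subtype.val h
  exact (MonoidHom.finite_iff_finite_ker_range _).2 ⟨this, inferInstance⟩

theorem Subgroup.finite_map (f : G →* H) (K : Subgroup G) [Finite K] : Finite (K.map f) :=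
  Finite.of_surjective _ (f.subgroupMap_surjective K)

instance MonoidHom.finite_ker_comp (g : H →* Q) (f : G →* H) [Finite f.ker] [Finite g.ker] :
    Finite (g.comp f).ker :=
  Subgroup.finite_comap_of_finite_ker f g.ker

instance MonoidHom.finite_ker_domRestrict (f : G →* H) [Finite f.ker] (K : Subgroup G) :
    Finite (f.domRestrict K).ker := by
  have : Finite K.subtype.ker := by rw [Subgroup.ker_subtype]; infer_instance
  rw [MonoidHom.ker_domRestrict]
  exact Subgroup.finite_comap_of_finite_ker K.subtype f.ker

instance QuotientGroup.finite_ker_mk' (N : Subgroup G) [N.Normal] [Finite N] :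
    Finite (mk' N).ker := by
  rwa [ker_mk']

theorem Subgroup.finite_sup (M N : Subgroup G) [N.Normal] [Finite M] [Finite N] :
    Finite ↥(M ⊔ N) := by
  have := Subgroup.finite_map (mk' N) M
  rw [sup_comm, ← comap_map_mk']
  exact Subgroup.finite_comap_of_finite_ker _ _

instance QuotientGroup.finite_ker_map_id {N₁ N : Subgroup G} [N₁.Normal] [N.Normal] [Finite N]
    (h : N₁ ≤ N) : Finite (map N₁ N (MonoidHom.id G) h).ker := by
  have := ker_map N₁ N (MonoidHom.id G) h
  rw [Subgroup.comap_id] at this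
  rw [this]
  exact Subgroup.finite_map _ _

theorem QuotientGroup.map_id_surjective {N₁ N : Subgroup G} [N₁.Normal] [N.Normal]
    (h : N₁ ≤ N) : Function.Surjective (map N₁ N (MonoidHom.id G) h) :=
  map_surjective_of_surjective _ _ _ mk_surjective _

end FiniteKernel

def IsoUpToFiniteKernels (G H : Type*) [Group G] [Group H] : Prop :=
  ∃ (M : Subgroup G) (N : Subgroup H) (_ : M.Normal) (_ : N.Normal),
    Finite M ∧ Finite N ∧ Nonempty ((G ⧸ M) ≃* (H ⧸ N))

namespace IsoUpToFiniteKernels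

variable {G H K Q : Type*} [Group G] [Group H] [Group K] [Group Q]

theorem of_range_eq (f : G →* Q) (g : H →* Q) [Finite f.ker] [Finite g.ker]
    (h : f.range = g.range) : IsoUpToFiniteKernels G H :=
  ⟨f.ker, g.ker, inferInstance, inferInstance, ‹_›, ‹_›, ⟨(quotientKerEquivRange f).trans <|
    (MulEquiv.subgroupCongr h).trans (quotientKerEquivRange g).symm⟩⟩

theorem exists_surjective (h : IsoUpToFiniteKernels G H) :
    ∃ (N : Subgroup H) (_ : N.Normal) (f : G →* H ⧸ N),
      Function.Surjective f ∧ Finite f.ker ∧ Finite N := by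
  obtain ⟨M, N, _, _, _, hN, ⟨e⟩⟩ := h
  refine ⟨N, inferInstance, (e : G ⧸ M →* H ⧸ N).comp (mk' M),
    e.surjective.comp (mk'_surjective M), ?_, hN⟩
  rw [MonoidHom.ker_mulEquiv_comp, ker_mk']
  assumption

theorem _root_.MulEquiv.isoUpToFiniteKernels (e : G ≃* H) : IsoUpToFiniteKernels G H :=
  ⟨⊥, ⊥, inferInstance, inferInstance, inferInstance, inferInstance,
    ⟨quotientBot.trans (e.trans quotientBot.symm)⟩⟩

theorem symm (h : IsoUpToFiniteKernels G H) : IsoUpToFiniteKernels H G :=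
  let ⟨M, N, hM, hN, fM, fN, ⟨e⟩⟩ := h
  ⟨N, M, hN, hM, fN, fM, ⟨e.symm⟩⟩

theorem trans (h₁ : IsoUpToFiniteKernels G H) (h₂ : IsoUpToFiniteKernels H K) :
    IsoUpToFiniteKernels G K := by
  obtain ⟨N₁, _, f, hf, _, _⟩ := h₁.exists_surjective
  obtain ⟨N₂, _, g, hg, _, _⟩ := h₂.symm.exists_surjective
  have := Subgroup.finite_sup N₁ N₂
  have hf' : Function.Surjective ((map N₁ (N₁ ⊔ N₂) (.id H) le_sup_left).comp f) :=
    (map_id_surjective le_sup_left).comp hf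
  have hg' : Function.Surjective ((map N₂ (N₁ ⊔ N₂) (.id H) le_sup_right).comp g) :=
    (map_id_surjective le_sup_right).comp hg
  exact of_range_eq _ _ <|
    (MonoidHom.range_eq_top.2 hf').trans (MonoidHom.range_eq_top.2 hg').symm

theorem exists_subgroup_of_index_ne_zero (h : IsoUpToFiniteKernels G H) (H' : Subgroup H)
    (hH' : H'.index ≠ 0) :
    ∃ G' : Subgroup G, G'.index ≠ 0 ∧ IsoUpToFiniteKernels G' H' := by
  obtain ⟨N, _, f, hf, _, _⟩ := h.exists_surjective
  set L := H'.map (mk' N)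
  refine ⟨L.comap f, ?_, of_range_eq (f.domRestrict (L.comap f)) ((mk' N).domRestrict H') ?_⟩
  · rw [Subgroup.index_comap_of_surjective _ hf]
    exact fun h0 => hH' <|
      Nat.eq_zero_of_zero_dvd (h0 ▸ Subgroup.index_map_dvd _ (mk'_surjective N))
  · rw [MonoidHom.domRestrict_range, MonoidHom.domRestrict_range,
      Subgroup.map_comap_eq_self_of_surjective hf]

end IsoUpToFiniteKernels

theorem commensurableUpToFiniteKernels_iff {G H : Type*} [Group G] [Group H] :
    CommensurableUpToFiniteKernels G H ↔ ∃ (G₁ : Subgroup G) (H₁ : Subgroup H),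
      G₁.index ≠ 0 ∧ H₁.index ≠ 0 ∧ IsoUpToFiniteKernels G₁ H₁ := by
  constructor
  · rintro ⟨G₁, H₁, M, N, hM, hN, hG₁, hH₁, fM, fN, e⟩
    exact ⟨G₁, H₁, hG₁, hH₁, M, N, hM, hN, fM, fN, e⟩
  · rintro ⟨G₁, H₁, hG₁, hH₁, M, N, hM, hN, fM, fN, e⟩
    exact ⟨G₁, H₁, M, N, hM, hN, hG₁, hH₁, fM, fN, e⟩

namespace CommensurableUpToFiniteKernels

open Subgroup

variable {G H K : Type*} [Group G] [Group H] [Group K]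

theorem refl : CommensurableUpToFiniteKernels G G :=
  commensurableUpToFiniteKernels_iff.2
    ⟨⊤, ⊤, by simp, by simp, (MulEquiv.refl _).isoUpToFiniteKernels⟩

theorem symm (h : CommensurableUpToFiniteKernels G H) : CommensurableUpToFiniteKernels H G :=
  let ⟨G₁, H₁, hG₁, hH₁, e⟩ := commensurableUpToFiniteKernels_iff.1 h
  commensurableUpToFiniteKernels_iff.2 ⟨H₁, G₁, hH₁, hG₁, e.symm⟩

theorem trans (h₁ : CommensurableUpToFiniteKernels G H)
    (h₂ : CommensurableUpToFiniteKernels H K) : CommensurableUpToFiniteKernels G K := by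
  obtain ⟨G₁, H₁, hG₁, hH₁, e₁⟩ := commensurableUpToFiniteKernels_iff.1 h₁
  obtain ⟨H₂, K₁, hH₂, hK₁, e₂⟩ := commensurableUpToFiniteKernels_iff.1 h₂
  obtain ⟨G₂, hG₂, e₃⟩ := e₁.exists_subgroup_of_index_ne_zero ((H₁ ⊓ H₂).subgroupOf H₁) <|
    by rw [← relIndex, inf_relIndex_left]; exact mt index_eq_zero_of_relIndex_eq_zero hH₂
  obtain ⟨K₂, hK₂, e₄⟩ := e₂.symm.exists_subgroup_of_index_ne_zero ((H₁ ⊓ H₂).subgroupOf H₂) <|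
    by rw [← relIndex, inf_relIndex_right]; exact mt index_eq_zero_of_relIndex_eq_zero hH₁
  have e₅ : (H₁ ⊓ H₂).subgroupOf H₁ ≃* (H₁ ⊓ H₂).subgroupOf H₂ :=
    (subgroupOfEquivOfLe inf_le_left).trans (subgroupOfEquivOfLe inf_le_right).symm
  refine commensurableUpToFiniteKernels_iff.2 ⟨G₂.map G₁.subtype, K₂.map K₁.subtype,
    by rw [index_map_subtype]; exact mul_ne_zero hG₂ hG₁,
    by rw [index_map_subtype]; exact mul_ne_zero hK₂ hK₁, ?_⟩
  exact (G₂.equivMapOfInjective _ G₁.subtype_injective).isoUpToFiniteKernels.symm.trans <|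
    e₃.trans <| e₅.isoUpToFiniteKernels.trans <| e₄.symm.trans <|
      (K₂.equivMapOfInjective _ K₁.subtype_injective).isoUpToFiniteKernels

end CommensurableUpToFiniteKernels

/-- Commensurability up to finite kernels is an equivalence relation on groups: it is
reflexive, symmetric, and transitive. -/
theorem stmt13 :
    (∀ (G : Type*) [Group G], CommensurableUpToFiniteKernels G G) ∧
    (∀ (G H : Type*) [Group G] [Group H],
      CommensurableUpToFiniteKernels G H → CommensurableUpToFiniteKernels H G) ∧
    (∀ (G H K : Type*) [Group G] [Group H] [Group K],
      CommensurableUpToFiniteKernels G H → CommensurableUpToFiniteKernels H K →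
        CommensurableUpToFiniteKernels G K) :=
  ⟨fun _ _ => .refl, fun _ _ _ _ => .symm, fun _ _ _ _ _ _ => .trans⟩
end
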